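/- Over R = k[[x,y,z]]/(y^2, z^2), for the matrix A = [[x, y], [0, z]] one has Ann.Coker(A) = (yz, xz) while Ann.Coker(A^T) = (xz); in particular Ann.Coker(A) ≠ Ann.Coker(A^T) when det(A) is nilpotent. -/

import Mathlib

/-!
An element `r` annihilates `Coker C` iff `C * B = r • 1` for some matrix `B`; the adjugate gives
`det C = x * z` for both `A` and `Aᵀ`, and `B = !![0, 0; z, y]` gives `y * z` for `A`.
For the converse inclusions, note that `R` is spanned over `k⟦x⟧` by `1, y, z, y * z`, so the
coefficient of `x^a y^b z^c` with `b, c ≤ 1` is well defined on `R`. Reading off such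
coefficients from the entries of `A * B = r • 1` shows `r = z * d` with `d` in the maximal ideal;
for `Aᵀ` it shows `r = x * a` with `a = y * (y * u₁ + z * u₂) + z * v`, so `r ∈ (x * z)`.
Finally `y * z ∉ (x * z)`, since every multiple of `x` has zero coefficient at `y z`.
-/

/-- `Ann.Coker(A) = Ann(R^m / A(R^n))`. -/
noncomputable def annCoker {R : Type*} [CommRing R] {m n : ℕ}
    (A : Matrix (Fin m) (Fin n) R) : Ideal R :=
  Module.annihilator R ((Fin m → R) ⧸ LinearMap.range A.mulVecLin)

open MvPowerSeries Matrix

section annCoker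

variable {S : Type*} [CommRing S]

theorem mem_annCoker_iff {m n : ℕ} (A : Matrix (Fin m) (Fin n) S) (r : S) :
    r ∈ annCoker A ↔ ∃ B : Matrix (Fin n) (Fin m) S, A * B = r • 1 := by
  rw [annCoker, Submodule.annihilator_quotient, Submodule.mem_colon]
  constructor
  · intro h
    choose w hw using fun i : Fin m => h (Pi.single i 1) trivial
    refine ⟨Matrix.of fun j i => w i j, ?_⟩
    ext a i
    have := congrFun (hw i) a
    simp only [Matrix.mulVecLin_apply] at this
    simpa [Matrix.mul_apply, Matrix.mulVec, dotProduct, Pi.single_apply, Matrix.one_apply,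
      eq_comm] using this
  · rintro ⟨B, hB⟩ v -
    refine ⟨B *ᵥ v, ?_⟩
    rw [Matrix.mulVecLin_apply, Matrix.mulVec_mulVec, hB, Matrix.smul_mulVec, Matrix.one_mulVec]

theorem det_mem_annCoker {n : ℕ} (A : Matrix (Fin n) (Fin n) S) : A.det ∈ annCoker A :=
  (mem_annCoker_iff A _).2 ⟨A.adjugate, A.mul_adjugate⟩

theorem fin_two_mul_eq_smul_one {a b c d r : S} {B : Matrix (Fin 2) (Fin 2) S} :
    !![a, b; c, d] * B = r • 1 ↔
      a * B 0 0 + b * B 1 0 = r ∧ a * B 0 1 + b * B 1 1 = 0 ∧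
        c * B 0 0 + d * B 1 0 = 0 ∧ c * B 0 1 + d * B 1 1 = r := by
  rw [B.eta_fin_two, Matrix.mul_fin_two, Matrix.one_fin_two, Matrix.smul_of]
  simp [and_assoc]

end annCoker

section MvPowerSeries

variable {σ K : Type*} [CommRing K]

theorem MvPowerSeries.mem_span_X_pow_iff (S : Finset σ) (n : σ → ℕ) (f : MvPowerSeries σ K) :
    f ∈ Ideal.span ((fun s => X s ^ n s) '' S) ↔
      ∀ m : σ →₀ ℕ, (∀ s ∈ S, m s < n s) → coeff m f = 0 := by
  classical
  constructor
  · intro hf m hm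
    obtain ⟨c, rfl⟩ := (Fintype.mem_span_image_iff_exists_fun _).1 hf
    rw [map_sum]
    refine Finset.sum_eq_zero fun s _ => ?_
    exact X_pow_dvd_iff.1 (dvd_mul_left _ _) m (hm s s.2)
  · induction S using Finset.induction_on generalizing f with
    | empty =>
      intro h
      rw [show f = 0 from ext fun m => h m (by simp)]
      exact zero_mem _
    | insert s T hs ih =>
      intro h
      let g : MvPowerSeries σ K := fun m => if m s < n s then coeff m f else 0
      have hg_coeff (m : σ →₀ ℕ) : coeff m g = if m s < n s then coeff m f else 0 := rfl
      have hfg : X s ^ n s ∣ f - g := X_pow_dvd_iff.2 fun m hm => by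
        simp [hg_coeff, hm]
      have hg : g ∈ Ideal.span ((fun s => X s ^ n s) '' T) := ih g fun m hm => by
        by_cases hms : m s < n s
        · simpa [hg_coeff, hms] using h m (by simpa [hms] using hm)
        · simp [hg_coeff, hms]
      obtain ⟨q, hq⟩ := hfg
      rw [← sub_add_cancel f g, hq]
      refine add_mem (Ideal.mul_mem_right _ _ (Ideal.subset_span ⟨s, by simp, rfl⟩)) ?_
      exact Ideal.span_mono (Set.image_mono (by simp)) hg

theorem MvPowerSeries.coeff_X_mul_single_add (s : σ) (f : MvPowerSeries σ K) (m : σ →₀ ℕ) :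
    coeff (Finsupp.single s 1 + m) (X s * f) = coeff m f := by
  rw [X, coeff_add_monomial_mul, one_mul]

theorem MvPowerSeries.coeff_X_mul_of_eq_zero {s : σ} (f : MvPowerSeries σ K) {m : σ →₀ ℕ}
    (h : m s = 0) : coeff m (X s * f) = 0 :=
  X_dvd_iff.1 (dvd_mul_right _ _) m h

end MvPowerSeries

namespace AnnCokerExample

variable (k : Type*) [CommRing k]

noncomputable abbrev I : Ideal (MvPowerSeries (Fin 3) k) := Ideal.span {X 1 ^ 2, X 2 ^ 2}

abbrev R := MvPowerSeries (Fin 3) k ⧸ I k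

variable {k}

noncomputable abbrev x : R k := Ideal.Quotient.mk (I k) (X 0)
noncomputable abbrev y : R k := Ideal.Quotient.mk (I k) (X 1)
noncomputable abbrev z : R k := Ideal.Quotient.mk (I k) (X 2)

variable (k) in
noncomputable abbrev A : Matrix (Fin 2) (Fin 2) (R k) := !![x, y; 0, z]

theorem y_mul_self : (y : R k) * y = 0 := by
  rw [← map_mul, Ideal.Quotient.eq_zero_iff_mem, ← sq]
  exact Ideal.subset_span (by simp)

theorem z_mul_self : (z : R k) * z = 0 := by
  rw [← map_mul, Ideal.Quotient.eq_zero_iff_mem, ← sq]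
  exact Ideal.subset_span (by simp)

theorem det_A : (A k).det = x * z := by
  rw [Matrix.det_fin_two_of]; ring

/-- The coefficient of the monomial `m` in a lift of `r`; it does not depend on the lift as long
as `m 1 < 2` and `m 2 < 2`, see `quotCoeff_mk`. -/
noncomputable def quotCoeff (m : Fin 3 →₀ ℕ) (r : R k) : k :=
  coeff m (Quotient.out r)

theorem quotCoeff_mk {m : Fin 3 →₀ ℕ} (h1 : m 1 < 2) (h2 : m 2 < 2)
    (f : MvPowerSeries (Fin 3) k) :
    quotCoeff m (Ideal.Quotient.mk (I k) f) = coeff m f := by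
  have hI : I k = Ideal.span ((fun s => X s ^ 2) '' ↑({1, 2} : Finset (Fin 3))) := by
    simp [I, Set.image_pair]
  have hmem : Quotient.out (Ideal.Quotient.mk (I k) f) - f ∈
      Ideal.span ((fun s => X s ^ 2) '' ↑({1, 2} : Finset (Fin 3))) := by
    rw [← hI]; exact Ideal.Quotient.eq.1 (Ideal.Quotient.mk_out _)
  have := (MvPowerSeries.mem_span_X_pow_iff _ _ _).1 hmem m (by simp; omega)
  rwa [map_sub, sub_eq_zero] at this

theorem quotCoeff_zero {m : Fin 3 →₀ ℕ} (h1 : m 1 < 2) (h2 : m 2 < 2) :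
    quotCoeff m (0 : R k) = 0 := by
  rw [← map_zero (Ideal.Quotient.mk (I k)), quotCoeff_mk h1 h2, map_zero]

theorem quotCoeff_add {m : Fin 3 →₀ ℕ} (h1 : m 1 < 2) (h2 : m 2 < 2) (r s : R k) :
    quotCoeff m (r + s) = quotCoeff m r + quotCoeff m s := by
  obtain ⟨f, rfl⟩ := Ideal.Quotient.mk_surjective r
  obtain ⟨g, rfl⟩ := Ideal.Quotient.mk_surjective s
  rw [← map_add, quotCoeff_mk h1 h2, quotCoeff_mk h1 h2, quotCoeff_mk h1 h2, map_add]

theorem quotCoeff_X_mul_single_add (i : Fin 3) {m : Fin 3 →₀ ℕ}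
    (h1 : (Finsupp.single i 1 + m : Fin 3 →₀ ℕ) 1 < 2)
    (h2 : (Finsupp.single i 1 + m : Fin 3 →₀ ℕ) 2 < 2) (r : R k) :
    quotCoeff (Finsupp.single i 1 + m) (Ideal.Quotient.mk (I k) (X i) * r) = quotCoeff m r := by
  obtain ⟨f, rfl⟩ := Ideal.Quotient.mk_surjective r
  have h1' : m 1 < 2 := lt_of_le_of_lt (by simp) h1
  have h2' : m 2 < 2 := lt_of_le_of_lt (by simp) h2
  rw [← map_mul, quotCoeff_mk h1 h2, quotCoeff_mk h1' h2', coeff_X_mul_single_add]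

theorem quotCoeff_X_mul_of_eq_zero {i : Fin 3} {m : Fin 3 →₀ ℕ} (h1 : m 1 < 2) (h2 : m 2 < 2)
    (hi : m i = 0) (r : R k) : quotCoeff m (Ideal.Quotient.mk (I k) (X i) * r) = 0 := by
  obtain ⟨f, rfl⟩ := Ideal.Quotient.mk_surjective r
  rw [← map_mul, quotCoeff_mk h1 h2, coeff_X_mul_of_eq_zero _ hi]

theorem exists_eq_of_quotCoeff_zero_eq_zero {r : R k} (h : quotCoeff 0 r = 0) :
    ∃ p q s, r = x * p + y * q + z * s := by
  obtain ⟨f, rfl⟩ := Ideal.Quotient.mk_surjective r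
  rw [quotCoeff_mk (by simp) (by simp)] at h
  have hf : f ∈ Ideal.span ((fun s => X s ^ 1) '' ↑(Finset.univ : Finset (Fin 3))) := by
    refine (MvPowerSeries.mem_span_X_pow_iff _ _ _).2 fun m hm => ?_
    rwa [show m = 0 by ext i; simpa using hm i (Finset.mem_univ i)]
  rw [Finset.coe_univ, Set.image_univ, Submodule.mem_span_range_iff_exists_fun] at hf
  obtain ⟨c, rfl⟩ := hf
  refine ⟨Ideal.Quotient.mk _ (c 0), Ideal.Quotient.mk _ (c 1), Ideal.Quotient.mk _ (c 2), ?_⟩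
  simp [Fin.sum_univ_three, mul_comm]

theorem exists_eq_of_quotCoeff_single_zero_eq_zero {r : R k}
    (h : ∀ a, quotCoeff (Finsupp.single 0 a) r = 0) : ∃ u v, r = y * u + z * v := by
  obtain ⟨f, rfl⟩ := Ideal.Quotient.mk_surjective r
  have hf : f ∈ Ideal.span ((fun s => X s ^ 1) '' ↑({1, 2} : Finset (Fin 3))) := by
    refine (MvPowerSeries.mem_span_X_pow_iff _ _ _).2 fun m hm => ?_
    have hm' : m = Finsupp.single 0 (m 0) := by
      ext i; fin_cases i <;> simp_all
    rw [hm', ← quotCoeff_mk (by simp) (by simp)]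
    exact h _
  simp only [Finset.coe_pair, Set.image_pair, pow_one] at hf
  obtain ⟨a, b, rfl⟩ := Ideal.mem_span_pair.1 hf
  exact ⟨Ideal.Quotient.mk _ a, Ideal.Quotient.mk _ b, by simp [mul_comm]⟩

theorem isNilpotent_det_A : IsNilpotent (A k).det :=
  ⟨2, by rw [det_A, mul_pow, sq (z : R k), z_mul_self, mul_zero]⟩

theorem annCoker_A_le : annCoker (A k) ≤ Ideal.span {(y : R k) * z, x * z} := by
  intro r hr
  obtain ⟨B, hB⟩ := (mem_annCoker_iff _ r).1 hr
  obtain ⟨-, h01, -, h11⟩ := fin_two_mul_eq_smul_one.1 hB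
  have hd : quotCoeff 0 (B 1 1) = 0 := by
    have := congrArg (quotCoeff (Finsupp.single 1 1 + 0)) h01
    simpa (disch := simp) only [quotCoeff_add, quotCoeff_X_mul_of_eq_zero,
      quotCoeff_X_mul_single_add, quotCoeff_zero, zero_add] using this
  obtain ⟨p, q, s, hpqs⟩ := exists_eq_of_quotCoeff_zero_eq_zero hd
  refine Ideal.mem_span_pair.2 ⟨q, p, ?_⟩
  linear_combination h11 - z * hpqs - s * z_mul_self (k := k)

theorem annCoker_A_transpose_le : annCoker (A k)ᵀ ≤ Ideal.span {(x : R k) * z} := by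
  intro r hr
  obtain ⟨B, hB⟩ := (mem_annCoker_iff _ r).1 hr
  have hAT : (A k)ᵀ = !![x, 0; y, z] := by
    ext i j; fin_cases i <;> fin_cases j <;> rfl
  rw [hAT, fin_two_mul_eq_smul_one] at hB
  simp only [zero_mul, add_zero] at hB
  obtain ⟨h00, h01, h10, h11⟩ := hB
  have hb {m : Fin 3 →₀ ℕ} (h1 : m 1 < 2) (h2 : m 2 < 2) : quotCoeff m (B 0 1) = 0 := by
    rw [← quotCoeff_X_mul_single_add 0 (by simp; omega) (by simp; omega), h01,
      quotCoeff_zero (by simp; omega) (by simp; omega)]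
  have ha (a : ℕ) : quotCoeff (Finsupp.single 0 a) (B 0 0) = 0 := by
    have := congrArg (quotCoeff (Finsupp.single 1 1 + Finsupp.single 0 a)) h10
    simpa (disch := simp) only [quotCoeff_add, quotCoeff_X_mul_of_eq_zero,
      quotCoeff_X_mul_single_add, quotCoeff_zero, add_zero] using this
  obtain ⟨u, v, huv⟩ := exists_eq_of_quotCoeff_single_zero_eq_zero ha
  have hu (a : ℕ) : quotCoeff (Finsupp.single 0 a) u = 0 := by
    have hxa : x * (y * u + z * v) = y * B 0 1 + z * B 1 1 := by rw [← huv, h00, h11]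
    have hl : quotCoeff (Finsupp.single 0 1 + (Finsupp.single 1 1 + Finsupp.single 0 a))
        (x * (y * u + z * v)) = quotCoeff (Finsupp.single 0 a) u := by
      simp (disch := simp) only [quotCoeff_add, quotCoeff_X_mul_of_eq_zero,
        quotCoeff_X_mul_single_add, add_zero]
    have hr : quotCoeff (Finsupp.single 1 1 + (Finsupp.single 0 1 + Finsupp.single 0 a))
        (y * B 0 1 + z * B 1 1) = 0 := by
      simp (disch := simp) only [quotCoeff_add, quotCoeff_X_mul_of_eq_zero,
        quotCoeff_X_mul_single_add, add_zero, hb]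
    rw [← hl, hxa, add_left_comm, hr]
  obtain ⟨u₁, u₂, hu₁₂⟩ := exists_eq_of_quotCoeff_single_zero_eq_zero hu
  refine Ideal.mem_span_singleton'.2 ⟨y * u₂ + v, ?_⟩
  linear_combination h00 - x * huv - x * y * hu₁₂ - x * u₁ * y_mul_self (k := k)

theorem span_le_annCoker_A : Ideal.span {(y : R k) * z, x * z} ≤ annCoker (A k) := by
  rw [Ideal.span_le, Set.insert_subset_iff, Set.singleton_subset_iff]
  refine ⟨(mem_annCoker_iff _ _).2 ⟨!![0, 0; z, y], ?_⟩,
    det_A (k := k) ▸ det_mem_annCoker _⟩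
  rw [fin_two_mul_eq_smul_one]
  simp [y_mul_self, z_mul_self, mul_comm]

theorem span_le_annCoker_A_transpose : Ideal.span {(x : R k) * z} ≤ annCoker (A k)ᵀ := by
  rw [Ideal.span_le, Set.singleton_subset_iff, ← det_A, ← Matrix.det_transpose]
  exact det_mem_annCoker _

theorem y_mul_z_notMem_span [Nontrivial k] : y * z ∉ Ideal.span {(x : R k) * z} := by
  intro h
  obtain ⟨c, hc⟩ := Ideal.mem_span_singleton'.1 h
  have hyz : quotCoeff (Finsupp.single 1 1 + Finsupp.single 2 1) ((y : R k) * z) = 1 := by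
    rw [← map_mul, quotCoeff_mk (by simp) (by simp), coeff_X_mul_single_add,
      coeff_index_single_self_X]
  have hxz : quotCoeff (Finsupp.single 1 1 + Finsupp.single 2 1) (c * (x * z)) = 0 := by
    rw [show c * (x * z) = x * (z * c) by ring]
    exact quotCoeff_X_mul_of_eq_zero (by simp) (by simp) (by simp) _
  exact one_ne_zero (hyz.symm.trans (hc ▸ hxz))

theorem annCoker_A : annCoker (A k) = Ideal.span {(y : R k) * z, x * z} :=
  le_antisymm annCoker_A_le span_le_annCoker_A

theorem annCoker_A_transpose : annCoker (A k)ᵀ = Ideal.span {(x : R k) * z} :=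
  le_antisymm annCoker_A_transpose_le span_le_annCoker_A_transpose

theorem annCoker_A_ne_annCoker_transpose [Nontrivial k] : annCoker (A k) ≠ annCoker (A k)ᵀ := by
  intro h
  apply y_mul_z_notMem_span (k := k)
  rw [← annCoker_A_transpose, ← h, annCoker_A]
  exact Ideal.subset_span (Set.mem_insert _ _)

end AnnCokerExample

/-- Over `R = k[[x,y,z]]/(y², z²)`, for `A = [[x, y], [0, z]]` one has
`Ann.Coker(A) = (yz, xz)` while `Ann.Coker(Aᵀ) = (xz)`; in particular
`Ann.Coker(A) ≠ Ann.Coker(Aᵀ)` (and `det A = xz` is nilpotent). -/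
theorem stmt_11 (k : Type*) [Field k] :
    let P := MvPowerSeries (Fin 3) k
    let I : Ideal P := Ideal.span {(MvPowerSeries.X 1 : P) ^ 2, (MvPowerSeries.X 2 : P) ^ 2}
    let R := P ⧸ I
    let x : R := Ideal.Quotient.mk I (MvPowerSeries.X 0)
    let y : R := Ideal.Quotient.mk I (MvPowerSeries.X 1)
    let z : R := Ideal.Quotient.mk I (MvPowerSeries.X 2)
    let A : Matrix (Fin 2) (Fin 2) R := !![x, y; 0, z]
    IsNilpotent A.det ∧
      annCoker A = Ideal.span {y * z, x * z} ∧
      annCoker A.transpose = Ideal.span {x * z} ∧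
      annCoker A ≠ annCoker A.transpose :=
  ⟨AnnCokerExample.isNilpotent_det_A, AnnCokerExample.annCoker_A,
    AnnCokerExample.annCoker_A_transpose, AnnCokerExample.annCoker_A_ne_annCoker_transpose⟩
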